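/- Let h solve the ellipsoid ODE with Lyapunov function W(x) = h'²(a²cos²h+sin²h)/(a²sech²x+tanh²x) + d(d+k−2)sin²h (k ≥ 3). If W(0) > d(d+k−2), then W(x) > d(d+k−2) for all x ≥ 0, and consequently h'(x) ≠ 0 for all x ≥ 0. -/

import Mathlib

/-!
Along a solution, the ODE turns the derivative of `W` into
`W' = 2 (k - 2) sinh x cosh x h'² (a² cos² h + sin² h) / (a² + sinh² x)`,
which is nonnegative for `x ≥ 0`; so `W` is nondecreasing on `[0, ∞)` and stays above
`d (d + k - 2)`. At a zero of `h'` we would have `W = d (d + k - 2) sin² h ≤ d (d + k - 2)`.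
-/

open Real Set

theorem sq_mul_cos_sq_add_sin_sq_pos {a : ℝ} (ha : a ≠ 0) (t : ℝ) :
    0 < a ^ 2 * cos t ^ 2 + sin t ^ 2 := by
  have ha2 : 0 < a ^ 2 := by positivity
  rcases eq_or_ne (sin t) 0 with hs | hs
  · rw [cos_sq', hs]
    simpa using ha2
  · exact add_pos_of_nonneg_of_pos (by positivity) (by positivity)

theorem sq_mul_inv_cosh_sq_add_tanh_sq (a x : ℝ) :
    a ^ 2 * (1 / cosh x) ^ 2 + tanh x ^ 2 = (a ^ 2 + sinh x ^ 2) / cosh x ^ 2 := by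
  rw [tanh_eq_sinh_div_cosh]
  field_simp

noncomputable def lyapunov (a D : ℝ) (h : ℝ → ℝ) (x : ℝ) : ℝ :=
  deriv h x ^ 2 * (a ^ 2 * cos (h x) ^ 2 + sin (h x) ^ 2) / (a ^ 2 * (1 / cosh x) ^ 2 + tanh x ^ 2)
    + D * sin (h x) ^ 2

theorem lyapunov_eq_mul_cosh_sq_div (a D : ℝ) (h : ℝ → ℝ) :
    lyapunov a D h = fun x => deriv h x ^ 2 * (a ^ 2 * cos (h x) ^ 2 + sin (h x) ^ 2)
      * cosh x ^ 2 / (a ^ 2 + sinh x ^ 2) + D * sin (h x) ^ 2 := by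
  ext x
  rw [lyapunov, sq_mul_inv_cosh_sq_add_tanh_sq, div_div_eq_mul_div]

theorem lyapunov_le_of_deriv_eq_zero {a D : ℝ} (hD : 0 ≤ D) {h : ℝ → ℝ} {x : ℝ}
    (hx : deriv h x = 0) : lyapunov a D h x ≤ D := by
  simpa [lyapunov, hx] using mul_le_of_le_one_right hD (sin_sq_le_one (h x))

/-- The Euler–Lagrange equation of the paper, with `κ = k - 2` and `D = d (d + k - 2)`. -/
def SolvesEllipsoidODEAt (a κ D : ℝ) (h : ℝ → ℝ) (x : ℝ) : Prop :=
  deriv (deriv h) x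
    + (1 / 2) * (1 - a ^ 2) * sin (2 * h x) / (a ^ 2 * cos (h x) ^ 2 + sin (h x) ^ 2)
      * deriv h x ^ 2
    - (1 - a ^ 2) * tanh x / (a ^ 2 + sinh x ^ 2) * deriv h x
    - κ * tanh x * deriv h x
    + (D / 2) * (a ^ 2 * (1 / cosh x) ^ 2 + tanh x ^ 2)
      / (a ^ 2 * cos (h x) ^ 2 + sin (h x) ^ 2) * sin (2 * h x) = 0

theorem hasDerivAt_lyapunov {a κ D : ℝ} (ha : a ≠ 0) {h : ℝ → ℝ} {x : ℝ}
    (hh : DifferentiableAt ℝ h x) (hh' : DifferentiableAt ℝ (deriv h) x)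
    (hODE : SolvesEllipsoidODEAt a κ D h x) :
    HasDerivAt (lyapunov a D h) (2 * κ * sinh x * cosh x * deriv h x ^ 2
      * (a ^ 2 * cos (h x) ^ 2 + sin (h x) ^ 2) / (a ^ 2 + sinh x ^ 2)) x := by
  have hsin := (hasDerivAt_sin (h x)).comp x hh.hasDerivAt
  have hcos := (hasDerivAt_cos (h x)).comp x hh.hasDerivAt
  have hP := ((hcos.pow 2).const_mul (a ^ 2)).add (hsin.pow 2)
  have hM := ((hasDerivAt_sinh x).pow 2).const_add (a ^ 2)
  have hM0 : a ^ 2 + sinh x ^ 2 ≠ 0 := by positivity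
  have hW := ((((hh'.hasDerivAt.pow 2).mul hP).mul ((hasDerivAt_cosh x).pow 2)).div hM hM0).add
    ((hsin.pow 2).const_mul D)
  rw [lyapunov_eq_mul_cosh_sq_div]
  refine hW.congr_deriv ?_
  norm_num only [Pi.mul_apply, Pi.pow_apply, Pi.add_apply, Function.comp_apply]
  have hC : cosh x ≠ 0 := (cosh_pos x).ne'
  have hP0 := (sq_mul_cos_sq_add_sin_sq_pos ha (h x)).ne'
  rw [SolvesEllipsoidODEAt, tanh_eq_sinh_div_cosh, sin_two_mul] at hODE
  -- the ODE enters with multiplier `∂W/∂h'`, which removes `h''` from `W'`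
  linear_combination (norm := (field_simp; ring1))
    (2 * deriv h x * (a ^ 2 * cos (h x) ^ 2 + sin (h x) ^ 2) * cosh x ^ 2
      / (a ^ 2 + sinh x ^ 2)) * hODE
    - (2 * deriv h x ^ 2 * (a ^ 2 * cos (h x) ^ 2 + sin (h x) ^ 2) * sinh x * cosh x
      / (a ^ 2 + sinh x ^ 2) ^ 2) * cosh_sq x

theorem monotoneOn_lyapunov {a κ D : ℝ} (ha : a ≠ 0) (hκ : 0 ≤ κ) {h : ℝ → ℝ}
    (hh : Differentiable ℝ h) (hh' : Differentiable ℝ (deriv h))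
    (hODE : ∀ x ≥ 0, SolvesEllipsoidODEAt a κ D h x) :
    MonotoneOn (lyapunov a D h) (Ici 0) := by
  have hW' (x : ℝ) (hx : 0 ≤ x) := hasDerivAt_lyapunov ha (hh x) (hh' x) (hODE x hx)
  refine monotoneOn_of_deriv_nonneg (convex_Ici 0)
    (fun x hx => (hW' x hx).continuousAt.continuousWithinAt) ?_ ?_ <;> rw [interior_Ici]
  · exact fun x hx => (hW' x hx.le).differentiableAt.differentiableWithinAt
  · intro x hx
    have := sinh_nonneg_iff.2 hx.le
    have := cosh_pos x
    rw [(hW' x hx.le).deriv]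
    positivity

theorem stmt15_general (k d : ℕ) (hk : 3 ≤ k) (a : ℝ) (ha : a ≠ 0)
    (h : ℝ → ℝ) (hreg : ContDiff ℝ 2 h)
    (hODE : ∀ x : ℝ, deriv (deriv h) x
        + (1 / 2) * (1 - a ^ 2) * Real.sin (2 * h x)
            / (a ^ 2 * Real.cos (h x) ^ 2 + Real.sin (h x) ^ 2) * (deriv h x) ^ 2
        - (1 - a ^ 2) * Real.tanh x / (a ^ 2 + Real.sinh x ^ 2) * deriv h x
        - ((k : ℝ) - 2) * Real.tanh x * deriv h x
        + ((d : ℝ) * ((d : ℝ) + (k : ℝ) - 2) / 2)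
            * (a ^ 2 * (1 / Real.cosh x) ^ 2 + Real.tanh x ^ 2)
            / (a ^ 2 * Real.cos (h x) ^ 2 + Real.sin (h x) ^ 2) * Real.sin (2 * h x) = 0)
    (W : ℝ → ℝ)
    (hW : ∀ x : ℝ, W x = (deriv h x) ^ 2 * (a ^ 2 * Real.cos (h x) ^ 2 + Real.sin (h x) ^ 2)
        / (a ^ 2 * (1 / Real.cosh x) ^ 2 + Real.tanh x ^ 2)
        + (d : ℝ) * ((d : ℝ) + (k : ℝ) - 2) * Real.sin (h x) ^ 2)
    (hW0 : (d : ℝ) * ((d : ℝ) + (k : ℝ) - 2) < W 0) :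
    ∀ x : ℝ, 0 ≤ x → (d : ℝ) * ((d : ℝ) + (k : ℝ) - 2) < W x ∧ deriv h x ≠ 0 := by
  obtain rfl : W = lyapunov a (d * (d + k - 2)) h := funext hW
  have hκ : (0 : ℝ) ≤ k - 2 := by
    have : (3 : ℝ) ≤ k := by exact_mod_cast hk
    linarith
  have hD : (0 : ℝ) ≤ d * (d + k - 2) :=
    mul_nonneg d.cast_nonneg (by linarith [d.cast_nonneg (α := ℝ)])
  have hmono := monotoneOn_lyapunov ha hκ (hreg.differentiable two_ne_zero)
    hreg.differentiable_deriv_two fun x _ => hODE x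
  intro x hx
  have hWx := hW0.trans_le (hmono self_mem_Ici hx hx)
  exact ⟨hWx, fun hx' => (lyapunov_le_of_deriv_eq_zero hD hx').not_gt hWx⟩

/-- If h solves the ellipsoid ODE and the Lyapunov function satisfies
W(0) > d(d+k−2), then W(x) > d(d+k−2) and h'(x) ≠ 0 for all x ≥ 0. -/
theorem stmt15 (k d : ℕ) (hk : 3 ≤ k) (hd : 1 ≤ d) (a : ℝ) (ha : a ≠ 0)
    (h : ℝ → ℝ) (hreg : ContDiff ℝ 2 h)
    (hODE : ∀ x : ℝ, deriv (deriv h) x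
        + (1 / 2) * (1 - a ^ 2) * Real.sin (2 * h x)
            / (a ^ 2 * Real.cos (h x) ^ 2 + Real.sin (h x) ^ 2) * (deriv h x) ^ 2
        - (1 - a ^ 2) * Real.tanh x / (a ^ 2 + Real.sinh x ^ 2) * deriv h x
        - ((k : ℝ) - 2) * Real.tanh x * deriv h x
        + ((d : ℝ) * ((d : ℝ) + (k : ℝ) - 2) / 2)
            * (a ^ 2 * (1 / Real.cosh x) ^ 2 + Real.tanh x ^ 2)
            / (a ^ 2 * Real.cos (h x) ^ 2 + Real.sin (h x) ^ 2) * Real.sin (2 * h x) = 0)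
    (W : ℝ → ℝ)
    (hW : ∀ x : ℝ, W x = (deriv h x) ^ 2 * (a ^ 2 * Real.cos (h x) ^ 2 + Real.sin (h x) ^ 2)
        / (a ^ 2 * (1 / Real.cosh x) ^ 2 + Real.tanh x ^ 2)
        + (d : ℝ) * ((d : ℝ) + (k : ℝ) - 2) * Real.sin (h x) ^ 2)
    (hW0 : (d : ℝ) * ((d : ℝ) + (k : ℝ) - 2) < W 0) :
    ∀ x : ℝ, 0 ≤ x → (d : ℝ) * ((d : ℝ) + (k : ℝ) - 2) < W x ∧ deriv h x ≠ 0 :=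
  stmt15_general k d hk a ha h hreg hODE W hW hW0
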